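/- arXiv:math/0404136 — 2 statements merged into one kernel-verified Lean document; each statement's English description precedes it below -/
import Mathlib

section
/- Let p ≥ 2 and n ≥ 1 be integers. The number of triples (q₁,q₂,q₃) of integers with q₁ ∈ {0,1}, 0 ≤ q₂ ≤ p, 0 ≤ q₃ ≤ p(n+1), satisfying all of: (i) not (q₂ ≤ q₃ and q₃ ≤ q₂ + pn); (ii) not (q₁ = 0 and q₃ ≤ p-1); (iii) not (q₁ = 1 and q₃ ≥ pn+1); (iv) q₂ ∉ {0, p}; and (v) (q₁,q₂,q₃) ∉ {(0,1,pn+2), (0,p-1,pn+p), (1,1,0), (1,p-1,p-2)}, is equal to max{p(p-1) - 4, 0}. -/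
set_option maxHeartbeats 1000000


theorem tight_triple_count (p n : ℤ) (hp : 2 ≤ p) (hn : 1 ≤ n) :
    ((Finset.filter
        (fun q : ℤ × ℤ × ℤ =>
          ¬(q.2.1 ≤ q.2.2 ∧ q.2.2 ≤ q.2.1 + p * n) ∧
          ¬(q.1 = 0 ∧ q.2.2 ≤ p - 1) ∧
          ¬(q.1 = 1 ∧ p * n + 1 ≤ q.2.2) ∧
          q.2.1 ≠ 0 ∧ q.2.1 ≠ p ∧
          q ≠ (0, 1, p * n + 2) ∧ q ≠ (0, p - 1, p * n + p) ∧
          q ≠ (1, 1, 0) ∧ q ≠ (1, p - 1, p - 2))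
        ((Finset.Icc (0 : ℤ) 1) ×ˢ (Finset.Icc (0 : ℤ) p) ×ˢ
          (Finset.Icc (0 : ℤ) (p * (n + 1))))).card : ℤ) =
      max (p * (p - 1) - 4) 0 := by
  have key : ∀ m : ℤ, p ≤ m →
      ((Finset.filter
        (fun q : ℤ × ℤ × ℤ =>
          ¬(q.2.1 ≤ q.2.2 ∧ q.2.2 ≤ q.2.1 + m) ∧
          ¬(q.1 = 0 ∧ q.2.2 ≤ p - 1) ∧
          ¬(q.1 = 1 ∧ m + 1 ≤ q.2.2) ∧
          q.2.1 ≠ 0 ∧ q.2.1 ≠ p ∧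
          q ≠ (0, 1, m + 2) ∧ q ≠ (0, p - 1, m + p) ∧
          q ≠ (1, 1, 0) ∧ q ≠ (1, p - 1, p - 2))
        ((Finset.Icc (0 : ℤ) 1) ×ˢ (Finset.Icc (0 : ℤ) p) ×ˢ
          (Finset.Icc (0 : ℤ) (m + p)))).card : ℤ) =
      max (p * (p - 1) - 4) 0 := by
    intro m hm
    set grid : Finset (ℤ × ℤ × ℤ) :=
      (Finset.Icc (0 : ℤ) 1) ×ˢ (Finset.Icc (0 : ℤ) p) ×ˢ (Finset.Icc (0 : ℤ) (m + p))
      with hgrid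
    set E : Finset (ℤ × ℤ × ℤ) :=
      {(0, 1, m + 2), (0, p - 1, m + p), (1, 1, 0), (1, p - 1, p - 2)} with hE
    set G : Finset (ℤ × ℤ × ℤ) :=
      Finset.filter (fun q : ℤ × ℤ × ℤ =>
          ¬(q.2.1 ≤ q.2.2 ∧ q.2.2 ≤ q.2.1 + m) ∧
          ¬(q.1 = 0 ∧ q.2.2 ≤ p - 1) ∧
          ¬(q.1 = 1 ∧ m + 1 ≤ q.2.2) ∧
          q.2.1 ≠ 0 ∧ q.2.1 ≠ p) grid with hG
    -- the filtered set is G \ E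
    have hFG : (Finset.filter
        (fun q : ℤ × ℤ × ℤ =>
          ¬(q.2.1 ≤ q.2.2 ∧ q.2.2 ≤ q.2.1 + m) ∧
          ¬(q.1 = 0 ∧ q.2.2 ≤ p - 1) ∧
          ¬(q.1 = 1 ∧ m + 1 ≤ q.2.2) ∧
          q.2.1 ≠ 0 ∧ q.2.1 ≠ p ∧
          q ≠ (0, 1, m + 2) ∧ q ≠ (0, p - 1, m + p) ∧
          q ≠ (1, 1, 0) ∧ q ≠ (1, p - 1, p - 2)) grid) = G \ E := by
      ext q
      simp only [hG, hE, Finset.mem_sdiff, Finset.mem_filter, Finset.mem_insert,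
        Finset.mem_singleton]
      tauto
    rw [hFG]
    -- E is contained in G
    have hEG : E ⊆ G := by
      intro q hq
      simp only [hE, Finset.mem_insert, Finset.mem_singleton] at hq
      obtain ⟨q1, q2, q3⟩ := q
      simp only [Prod.mk.injEq] at hq
      simp only [hG, hgrid, Finset.mem_filter, Finset.mem_product, Finset.mem_Icc]
      omega
    -- |G| = p * (p-1) via a bijection with Icc 1 (p-1) × Icc 0 (p-1)
    have hGcard : (G.card : ℤ) = p * (p - 1) := by
      have hcard : G.card = ((Finset.Icc (1 : ℤ) (p - 1)) ×ˢ (Finset.Icc (0 : ℤ) (p - 1))).card := by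
        apply Finset.card_bij
          (fun q _ => ((q.2.1 : ℤ), if q.1 = 0 then q.2.2 - m - 1 else q.2.2))
        · rintro ⟨q1, q2, q3⟩ hq
          simp only [hG, hgrid, Finset.mem_filter, Finset.mem_product, Finset.mem_Icc] at hq
          simp only [Finset.mem_product, Finset.mem_Icc]
          by_cases h0 : q1 = 0
          · rw [if_pos h0]; omega
          · rw [if_neg h0]; omega
        · rintro ⟨q1, q2, q3⟩ h1 ⟨r1, r2, r3⟩ h2 heq
          simp only [hG, hgrid, Finset.mem_filter, Finset.mem_product, Finset.mem_Icc] at h1 h2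
          simp only [Prod.mk.injEq] at heq ⊢
          obtain ⟨heq1, heq2⟩ := heq
          split_ifs at heq2 with hq0 hr0 hr0 <;> omega
        · rintro ⟨a, c⟩ hb
          simp only [Finset.mem_product, Finset.mem_Icc] at hb
          by_cases hac : a ≤ c
          · refine ⟨(0, a, c + m + 1), ?_, ?_⟩
            · simp only [hG, hgrid, Finset.mem_filter, Finset.mem_product, Finset.mem_Icc]
              omega
            · simp only [Prod.mk.injEq, true_and]
              split_ifs <;> omega
          · refine ⟨(1, a, c), ?_, ?_⟩
            · simp only [hG, hgrid, Finset.mem_filter, Finset.mem_product, Finset.mem_Icc]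
              omega
            · simp only [Prod.mk.injEq, true_and]
              split_ifs <;> omega
      rw [hcard, Finset.card_product, Int.card_Icc, Int.card_Icc]
      have h1 : (p - 1 - 1 + 1).toNat = (p - 1).toNat := by omega
      push_cast [h1]
      rw [Int.toNat_of_nonneg (by omega), Int.toNat_of_nonneg (by omega)]
      ring
    have hsub : ((G \ E).card : ℤ) = (G.card : ℤ) - (E.card : ℤ) := by
      rw [Finset.card_sdiff_of_subset hEG]
      exact_mod_cast Nat.cast_sub (Finset.card_le_card hEG)
    rw [hsub, hGcard]
    -- compute |E|, splitting on p = 2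
    rcases eq_or_lt_of_le hp with hp2 | hp3
    · -- p = 2 : E has two distinct elements
      have hEeq : E = {((0 : ℤ), (1 : ℤ), m + 2), ((1 : ℤ), (1 : ℤ), (0 : ℤ))} := by
        ext q
        simp only [hE, Finset.mem_insert, Finset.mem_singleton]
        obtain ⟨q1, q2, q3⟩ := q
        simp only [Prod.mk.injEq]
        omega
      have hEc : E.card = 2 := by
        rw [hEeq]
        rw [Finset.card_insert_of_notMem, Finset.card_singleton]
        simp only [Finset.mem_singleton, Prod.mk.injEq]
        omega
      rw [hEc, ← hp2]
      norm_num
    · -- p ≥ 3 : E has four distinct elements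
      have hEc : E.card = 4 := by
        rw [hE]
        rw [Finset.card_insert_of_notMem, Finset.card_insert_of_notMem,
          Finset.card_insert_of_notMem, Finset.card_singleton]
        · simp only [Finset.mem_singleton, Prod.mk.injEq]; omega
        · simp only [Finset.mem_insert, Finset.mem_singleton, Prod.mk.injEq]; omega
        · simp only [Finset.mem_insert, Finset.mem_singleton, Prod.mk.injEq]; omega
      rw [hEc]
      have : max (p * (p - 1) - 4) 0 = p * (p - 1) - 4 := by
        rw [max_eq_left]; nlinarith
      rw [this]
      push_cast
      ring
  have h1 : p * (n + 1) = p * n + p := by ring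
  rw [h1]
  exact key (p * n) (by nlinarith)
end

section
/- Let p ≥ 2 and n ≥ 1 be integers and let G be the abelian group generated by five elements μ_{a₁}, μ_{a₂}, μ_b, μ_c, μ_d subject to the relations n·μ_{a₁} + μ_{a₂} = 0, -p·μ_{a₂} + μ_{a₁} + μ_d = 0, p·μ_b + μ_d = 0, (-p(n+1)-1)·μ_c + μ_d = 0, and μ_{a₂} + μ_b + μ_c + μ_d = 0. Then G is cyclic, generated by μ_d, of order h_S = p(pn+1)(p(n+1)+2) - p(n+1) - 1, and moreover μ_{a₁} = (n(n+1)p² + 2np - 1 - n)·μ_d, μ_{a₂} = -n·μ_{a₁}, μ_b = ((-n²-n)p² + (-1-3n)p - 1 + n)·μ_d, and μ_c = ((n²+2n+1)np² + p(2n²+3n+1) - (n+2)n)·μ_d in G. -/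
/-!
Modulo the relations, each generator is an explicit integer multiple `cᵢ • μ_d`, and
`h_S • μ_d = 0`; both are integer combinations of the relations. So the group is cyclic,
generated by `μ_d`, of order dividing `h_S`. Conversely every relation vector has dot product
with `c` divisible by `h_S`, so `μᵢ ↦ cᵢ` defines a homomorphism onto `ZMod h_S` sending `μ_d`
to `1`, and the order of `μ_d` is exactly `h_S`.
-/

/-- The relation vectors presenting `H₁(S_{p,n}; ℤ)` in the generators
`(μ_{a₁}, μ_{a₂}, μ_b, μ_c, μ_d)`. -/
def relVecs (p n : ℤ) : Set (Fin 5 → ℤ) :=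
  { ![n, 1, 0, 0, 0], ![1, -p, 0, 0, 1], ![0, 0, p, 0, 1],
    ![0, 0, 0, -(p * (n + 1)) - 1, 1], ![0, 1, 1, 1, 1] }

/-- The abelian group presented by the five generators and five relations. -/
def PresGroup (p n : ℤ) :=
  (Fin 5 → ℤ) ⧸ Submodule.span ℤ (relVecs p n)

instance (p n : ℤ) : AddCommGroup (PresGroup p n) :=
  Submodule.Quotient.addCommGroup _

/-- The images of the five generators in the presented group. -/
def μ (p n : ℤ) (i : Fin 5) : PresGroup p n :=
  Submodule.Quotient.mk (Pi.single i 1)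

lemma card_eq_of_forall_mem_zmultiples {G : Type*} [AddCommGroup G] {g : G}
    (hg : ∀ x, x ∈ AddSubgroup.zmultiples g) {N : ℕ} (hN : N • g = 0) (φ : G →+ ZMod N)
    (hφ : φ g = 1) : Nat.card G = N := by
  rw [← addOrderOf_eq_card_of_forall_mem_zmultiples hg]
  refine Nat.dvd_antisymm (addOrderOf_dvd_of_nsmul_eq_zero hN) ?_
  simpa [hφ] using addOrderOf_map_dvd φ g

namespace PresGroup

variable {p n : ℤ}

lemma mkQ_eq_sum_smul_μ (v : Fin 5 → ℤ) :
    (Submodule.span ℤ (relVecs p n)).mkQ v = ∑ i, v i • μ p n i := by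
  conv_lhs => rw [pi_eq_sum_univ' v]
  simp only [map_sum, map_zsmul]
  rfl

lemma sum_smul_μ_eq_zero {r : Fin 5 → ℤ} (hr : r ∈ relVecs p n) : ∑ i, r i • μ p n i = 0 := by
  rw [← mkQ_eq_sum_smul_μ]
  exact (Submodule.Quotient.mk_eq_zero _).mpr (Submodule.subset_span hr)

lemma μ_relations :
    n • μ p n 0 + μ p n 1 = 0 ∧ μ p n 0 - p • μ p n 1 + μ p n 4 = 0 ∧
      p • μ p n 2 + μ p n 4 = 0 ∧ (-(p * (n + 1)) - 1) • μ p n 3 + μ p n 4 = 0 ∧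
      μ p n 1 + μ p n 2 + μ p n 3 + μ p n 4 = 0 := by
  have h (r) (hr : r ∈ relVecs p n) := sum_smul_μ_eq_zero hr
  simpa [relVecs, forall_eq_or_imp, Fin.sum_univ_five, sub_eq_add_neg] using h

def coeff (p n : ℤ) : Fin 5 → ℤ :=
  ![n * (n + 1) * p ^ 2 + 2 * n * p - 1 - n,
    -n * (n * (n + 1) * p ^ 2 + 2 * n * p - 1 - n),
    (-n ^ 2 - n) * p ^ 2 + (-1 - 3 * n) * p - 1 + n,
    (n ^ 2 + 2 * n + 1) * n * p ^ 2 + p * (2 * n ^ 2 + 3 * n + 1) - (n + 2) * n,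
    1]

def homologyOrder (p n : ℤ) : ℤ := p * (p * n + 1) * (p * (n + 1) + 2) - p * (n + 1) - 1

lemma μ_eq_coeff_smul (i : Fin 5) : μ p n i = coeff p n i • μ p n 4 := by
  obtain ⟨h₁, h₂, h₃, h₄, h₅⟩ := μ_relations (p := p) (n := n)
  fin_cases i <;> simp only [coeff, Fin.zero_eta, Fin.mk_one, Fin.reduceFinMk, Matrix.cons_val]
  -- each certificate solves `∑ⱼ aⱼ rⱼ = eᵢ - (coeff p n i) e₄` over the relation vectors `rⱼ`
  · linear_combination (norm := module) (p + p * n) • h₁ + (1 - p * n - p * n ^ 2) • h₂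
      + (n + p * n + p * n ^ 2) • h₃ + (-(p * n)) • h₄
      + (-(p * n) - p ^ 2 * n - p ^ 2 * n ^ 2) • h₅
  · linear_combination (norm := module) (1 - p * n - p * n ^ 2) • h₁
      + (-n + p * n ^ 2 + p * n ^ 3) • h₂
      + (-n ^ 2 - p * n ^ 2 - p * n ^ 3) • h₃ + (p * n ^ 2) • h₄
      + (p * n ^ 2 + p ^ 2 * n ^ 2 + p ^ 2 * n ^ 3) • h₅
  · linear_combination (norm := module) (-1 - p - p * n) • h₁ + (n + p * n + p * n ^ 2) • h₂
      + (-1 - 2 * n - p * n - p * n ^ 2) • h₃ + (1 + p * n) • h₄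
      + (1 + p + 2 * p * n + p ^ 2 * n + p ^ 2 * n ^ 2) • h₅
  · linear_combination (norm := module) (p + 2 * p * n + p * n ^ 2) • h₁
      + (-(p * n) - 2 * p * n ^ 2 - p * n ^ 3) • h₂
      + (1 + 2 * n + n ^ 2 + p * n + 2 * p * n ^ 2 + p * n ^ 3) • h₃
      + (-1 - p * n - p * n ^ 2) • h₄
      + (-p - 2 * p * n - p * n ^ 2 - p ^ 2 * n - 2 * p ^ 2 * n ^ 2 - p ^ 2 * n ^ 3) • h₅
  · simp

lemma homologyOrder_smul_μ_four : homologyOrder p n • μ p n 4 = 0 := by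
  unfold homologyOrder
  obtain ⟨h₁, h₂, h₃, h₄, h₅⟩ := μ_relations (p := p) (n := n)
  linear_combination (norm := module) (-p - p ^ 2 - p ^ 2 * n) • h₁
    + (p * n + p ^ 2 * n + p ^ 2 * n ^ 2) • h₂
    + (-1 - p - 2 * p * n - p ^ 2 * n - p ^ 2 * n ^ 2) • h₃ + (p + p ^ 2 * n) • h₄
    + (p + p ^ 2 + 2 * p ^ 2 * n + p ^ 3 * n + p ^ 3 * n ^ 2) • h₅

lemma μ_one_eq : μ p n 1 = (-n) • μ p n 0 := by
  linear_combination (norm := module) μ_relations.1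

lemma mem_zmultiples_μ_four (x : PresGroup p n) : x ∈ AddSubgroup.zmultiples (μ p n 4) := by
  obtain ⟨v, rfl⟩ := (Submodule.span ℤ (relVecs p n)).mkQ_surjective x
  rw [mkQ_eq_sum_smul_μ]
  refine AddSubgroup.sum_mem _ fun i _ => AddSubgroup.zsmul_mem _ ?_ _
  rw [μ_eq_coeff_smul i]
  exact AddSubgroup.zsmul_mem _ (AddSubgroup.mem_zmultiples _) _

section lift

variable {A : Type*} [AddCommGroup A] (x : Fin 5 → A)

def lift (hx : ∀ r ∈ relVecs p n, ∑ i, r i • x i = 0) : PresGroup p n →+ A :=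
  ((Submodule.span ℤ (relVecs p n)).liftQ (Fintype.linearCombination ℤ x)
    (Submodule.span_le.mpr fun r hr => by
      simpa [Fintype.linearCombination_apply] using hx r hr)).toAddMonoidHom

lemma lift_μ (hx : ∀ r ∈ relVecs p n, ∑ i, r i • x i = 0) (i : Fin 5) :
    lift x hx (μ p n i) = x i := by
  show Fintype.linearCombination ℤ x (Pi.single i 1) = x i
  simp [Fintype.linearCombination_apply, Pi.single_apply]

end lift

lemma homologyOrder_dvd_dotProduct_coeff {r : Fin 5 → ℤ} (hr : r ∈ relVecs p n) :
    homologyOrder p n ∣ r ⬝ᵥ coeff p n := by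
  simp only [relVecs, Set.mem_insert_iff, Set.mem_singleton_iff] at hr
  rcases hr with rfl | rfl | rfl | rfl | rfl <;>
    simp only [dotProduct, Fin.sum_univ_five, coeff, homologyOrder, Matrix.cons_val]
  exacts [⟨0, by ring⟩, ⟨n, by ring⟩, ⟨-1, by ring⟩, ⟨-(n + 1) ^ 2, by ring⟩, ⟨0, by ring⟩]

lemma homologyOrder_pos (hp : 2 ≤ p) (hn : 1 ≤ n) : 0 < homologyOrder p n := by
  have hpn : 0 ≤ p * n := by positivity
  have hq : p * (n + 1) + 2 ≤ (p * n + 1) * (p * (n + 1) + 2) := by nlinarith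
  unfold homologyOrder
  nlinarith

def toZMod {N : ℕ} (hN : (N : ℤ) ∣ homologyOrder p n) : PresGroup p n →+ ZMod N :=
  lift (fun i => (coeff p n i : ZMod N)) fun r hr => by
    have hdvd := (ZMod.intCast_zmod_eq_zero_iff_dvd _ N).mpr
      (hN.trans (homologyOrder_dvd_dotProduct_coeff hr))
    simpa [dotProduct, Fin.sum_univ_five] using hdvd

lemma toZMod_μ_four {N : ℕ} (hN : (N : ℤ) ∣ homologyOrder p n) : toZMod hN (μ p n 4) = 1 := by
  simp [toZMod, lift_μ, coeff]

lemma card_eq (hp : 2 ≤ p) (hn : 1 ≤ n) :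
    Nat.card (PresGroup p n) = (homologyOrder p n).toNat := by
  have hN : ((homologyOrder p n).toNat : ℤ) = homologyOrder p n :=
    Int.toNat_of_nonneg (homologyOrder_pos hp hn).le
  refine card_eq_of_forall_mem_zmultiples mem_zmultiples_μ_four ?_ (toZMod hN.dvd)
    (toZMod_μ_four hN.dvd)
  rw [← natCast_zsmul, hN, homologyOrder_smul_μ_four]

end PresGroup

theorem homology_presentation (p n : ℤ) (hp : 2 ≤ p) (hn : 1 ≤ n) :
    (∀ x : PresGroup p n, ∃ k : ℤ, x = k • μ p n 4) ∧
      Nat.card (PresGroup p n) =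
        (p * (p * n + 1) * (p * (n + 1) + 2) - p * (n + 1) - 1).toNat ∧
      μ p n 0 = (n * (n + 1) * p ^ 2 + 2 * n * p - 1 - n) • μ p n 4 ∧
      μ p n 1 = (-n) • μ p n 0 ∧
      μ p n 2 = ((-n ^ 2 - n) * p ^ 2 + (-1 - 3 * n) * p - 1 + n) • μ p n 4 ∧
      μ p n 3 =
        ((n ^ 2 + 2 * n + 1) * n * p ^ 2 + p * (2 * n ^ 2 + 3 * n + 1) - (n + 2) * n) •
          μ p n 4 := by
  refine ⟨fun x => ?_, PresGroup.card_eq hp hn, PresGroup.μ_eq_coeff_smul 0,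
    PresGroup.μ_one_eq, PresGroup.μ_eq_coeff_smul 2, PresGroup.μ_eq_coeff_smul 3⟩
  obtain ⟨k, hk⟩ := AddSubgroup.mem_zmultiples_iff.mp (PresGroup.mem_zmultiples_μ_four x)
  exact ⟨k, hk.symm⟩
end
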